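/- arXiv:2305.19047 — 5 statements merged into one kernel-verified Lean document; each statement's English description precedes it below -/
import Mathlib

section
/- Let v₁,…,vₙ be unit vectors in ℝ^d with ⟨vᵢ,vⱼ⟩ ≤ α for all i ≠ j, where 0 ≤ α < 1. Fix u = v₁ and let N⁻(u) = { i : ⟨u,vᵢ⟩ < 0 }. Then Σ_{i ∈ N⁻(u)} ⟨u,vᵢ⟩² ≤ 1 + α · (Σ_{i ∈ N⁻(u)} ⟨u,vᵢ⟩)². -/
open Finset RealInnerProductSpace

/-!
With `cᵢ = ⟪u, vᵢ⟫` and `y = ∑_{i ∈ N⁻(u)} cᵢ vᵢ`, positivity of `‖u - y‖²` reads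
`0 ≤ 1 - 2 S + ‖y‖²`, where `S = ∑ cᵢ²` and `T = ∑ cᵢ`. Since all `cᵢ` are negative, each
off-diagonal Gram entry can be bounded by `α`, giving `‖y‖² ≤ (1 - α) S + α T²`; hence
`(1 + α) S ≤ 1 + α T²`.
-/

theorem norm_sum_smul_sq_le_of_inner_le {ι E : Type*} [NormedAddCommGroup E]
    [InnerProductSpace ℝ E] (s : Finset ι) (v : ι → E) (c : ι → ℝ) (α : ℝ)
    (hunit : ∀ i ∈ s, ‖v i‖ = 1) (hpair : ∀ i ∈ s, ∀ j ∈ s, i ≠ j → ⟪v i, v j⟫ ≤ α)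
    (hsign : ∀ i ∈ s, ∀ j ∈ s, 0 ≤ c i * c j) :
    ‖∑ i ∈ s, c i • v i‖ ^ 2 ≤ (1 - α) * ∑ i ∈ s, c i ^ 2 + α * (∑ i ∈ s, c i) ^ 2 := by
  classical
  have hexpand : ‖∑ i ∈ s, c i • v i‖ ^ 2 = ∑ i ∈ s, ∑ j ∈ s, c i * c j * ⟪v i, v j⟫ := by
    rw [← real_inner_self_eq_norm_sq, sum_inner]
    refine sum_congr rfl fun i _ => ?_
    rw [inner_sum]
    refine sum_congr rfl fun j _ => ?_
    rw [real_inner_smul_left, real_inner_smul_right, mul_assoc]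
  have hentry : ∀ i ∈ s, ∀ j ∈ s,
      c i * c j * ⟪v i, v j⟫ ≤ α * (c i * c j) + if i = j then (1 - α) * c i ^ 2 else 0 := by
    intro i hi j hj
    by_cases hij : i = j
    · subst hij
      rw [real_inner_self_eq_norm_sq, hunit i hi, if_pos rfl]
      exact le_of_eq (by ring)
    · simp only [hij, if_false, add_zero]
      nlinarith [hpair i hi j hj hij, hsign i hi j hj]
  calc ‖∑ i ∈ s, c i • v i‖ ^ 2
      ≤ ∑ i ∈ s, ∑ j ∈ s, (α * (c i * c j) + if i = j then (1 - α) * c i ^ 2 else 0) :=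
        hexpand ▸ sum_le_sum fun i hi => sum_le_sum fun j hj => hentry i hi j hj
    _ = (1 - α) * ∑ i ∈ s, c i ^ 2 + α * (∑ i ∈ s, c i) ^ 2 := by
        have hdiag : ∀ i ∈ s, (∑ j ∈ s, if i = j then (1 - α) * c i ^ 2 else 0) =
            (1 - α) * c i ^ 2 := fun i hi => by rw [sum_ite_eq, if_pos hi]
        rw [sum_congr rfl fun i hi => by rw [sum_add_distrib, hdiag i hi], sum_add_distrib,
          ← mul_sum]
        simp only [← mul_sum, ← sum_mul, ← sq]
        ring

theorem neg_neighborhood_bound_general {n d : ℕ} (α : ℝ) (hα0 : 0 ≤ α)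
    (v : Fin (n + 1) → EuclideanSpace ℝ (Fin d))
    (hunit : ∀ i, ‖v i‖ = 1)
    (hpair : ∀ i j, i ≠ j → (inner ℝ (v i) (v j) : ℝ) ≤ α) :
    ∑ i ∈ Finset.univ.filter (fun i => (inner ℝ (v 0) (v i) : ℝ) < 0),
        (inner ℝ (v 0) (v i) : ℝ) ^ 2
      ≤ 1 + α * (∑ i ∈ Finset.univ.filter (fun i => (inner ℝ (v 0) (v i) : ℝ) < 0),
          (inner ℝ (v 0) (v i) : ℝ)) ^ 2 := by
  classical
  set c : Fin (n + 1) → ℝ := fun i => ⟪v 0, v i⟫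
  set N := univ.filter (fun i => (inner ℝ (v 0) (v i) : ℝ) < 0)
  set S := ∑ i ∈ N, c i ^ 2
  set T := ∑ i ∈ N, c i
  set y := ∑ i ∈ N, c i • v i
  have hneg : ∀ i ∈ N, c i < 0 := fun i hi => (mem_filter.mp hi).2
  have hy_inner : ⟪v 0, y⟫ = S := by
    simp only [y, S, inner_sum, real_inner_smul_right, sq, c]
  have hy_norm : ‖y‖ ^ 2 ≤ (1 - α) * S + α * T ^ 2 :=
    norm_sum_smul_sq_le_of_inner_le N v c α (fun i _ => hunit i) (fun i _ j _ => hpair i j)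
      fun i hi j hj => (mul_pos_of_neg_of_neg (hneg i hi) (hneg j hj)).le
  have hgram : 0 ≤ ‖v 0 - y‖ ^ 2 := sq_nonneg _
  rw [norm_sub_sq_real, hunit 0, hy_inner] at hgram
  have hαS : 0 ≤ α * S := mul_nonneg hα0 (sum_nonneg fun i _ => sq_nonneg (c i))
  linarith

theorem neg_neighborhood_bound {n d : ℕ} (α : ℝ) (hα0 : 0 ≤ α) (hα1 : α < 1)
    (v : Fin (n + 1) → EuclideanSpace ℝ (Fin d))
    (hunit : ∀ i, ‖v i‖ = 1)
    (hpair : ∀ i j, i ≠ j → (inner ℝ (v i) (v j) : ℝ) ≤ α) :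
    ∑ i ∈ Finset.univ.filter (fun i => (inner ℝ (v 0) (v i) : ℝ) < 0),
        (inner ℝ (v 0) (v i) : ℝ) ^ 2
      ≤ 1 + α * (∑ i ∈ Finset.univ.filter (fun i => (inner ℝ (v 0) (v i) : ℝ) < 0),
          (inner ℝ (v 0) (v i) : ℝ)) ^ 2 :=
  neg_neighborhood_bound_general α hα0 v hunit hpair
end

section
/- Let 𝒞 be a set of n unit vectors in ℝ^d with all pairwise inner products at most α, where 0 ≤ α < 1. For u ∈ 𝒞 let γ(u) = Σ_{v ∈ 𝒞, ⟨u,v⟩ < 0} ⟨u,v⟩. Then Σ_{u ∈ 𝒞} γ(u)² ≤ (27/4)(1 + αn)² n. -/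
/-!
Let `γ(u) ≤ 0` and `h(u) ≥ 0` be the sums of the negative and of the nonnegative inner products of
`u` with the code, `X = ∑ v` and `Y = ∑ -γ(u) • u`. Then `⟪u, X⟫ = h(u) + γ(u)` and `h(u) ≤ B := 1 + αn`,
so `0 ≤ ‖X‖² = ∑ (h + γ)` gives both `∑ -γ ≤ nB` and `‖X‖² ≤ nB`, while the pairwise bound gives
`‖Y‖² ≤ ∑ γ² + α (∑ γ)²`. Cauchy–Schwarz for `⟪Y, X⟫ = ∑ -γ h - ∑ γ²` turns this into a quadratic
inequality for `∑ γ²` which forces `∑ γ² ≤ 3nB²`.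
-/

open Finset RealInnerProductSpace

variable {E : Type*} [NormedAddCommGroup E] [InnerProductSpace ℝ E]

/-- The paper's `γ(u)`. -/
noncomputable def negInnerSum (C : Finset E) (u : E) : ℝ := ∑ v ∈ C with ⟪u, v⟫ < 0, ⟪u, v⟫

noncomputable def nonnegInnerSum (C : Finset E) (u : E) : ℝ := ∑ v ∈ C with ¬ ⟪u, v⟫ < 0, ⟪u, v⟫

section InnerSums

variable (C : Finset E)

lemma negInnerSum_nonpos (u : E) : negInnerSum C u ≤ 0 :=
  sum_nonpos fun _ hv => (mem_filter.1 hv).2.le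

lemma nonnegInnerSum_add_negInnerSum (u : E) :
    nonnegInnerSum C u + negInnerSum C u = ⟪u, ∑ v ∈ C, v⟫ := by
  rw [inner_sum, add_comm]
  exact sum_filter_add_sum_filter_not _ _ _

lemma norm_sum_sq_eq_sum_inner_sums :
    ‖∑ v ∈ C, v‖ ^ 2 = ∑ u ∈ C, (nonnegInnerSum C u + negInnerSum C u) := by
  simp_rw [← real_inner_self_eq_norm_sq, nonnegInnerSum_add_negInnerSum]
  exact sum_inner _ _ _

lemma norm_sum_sq_le_sum_nonnegInnerSum :
    ‖∑ v ∈ C, v‖ ^ 2 ≤ ∑ u ∈ C, nonnegInnerSum C u := by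
  rw [norm_sum_sq_eq_sum_inner_sums, sum_add_distrib]
  linarith [sum_nonpos fun u (_ : u ∈ C) => negInnerSum_nonpos C u]

lemma sum_neg_negInnerSum_le_sum_nonnegInnerSum :
    ∑ u ∈ C, -negInnerSum C u ≤ ∑ u ∈ C, nonnegInnerSum C u := by
  have := norm_sum_sq_eq_sum_inner_sums C
  rw [sum_add_distrib] at this
  rw [sum_neg_distrib]
  linarith [sq_nonneg ‖∑ v ∈ C, v‖]

lemma inner_sum_smul_sum_eq (w : E → ℝ) :
    ⟪∑ u ∈ C, w u • u, ∑ v ∈ C, v⟫ =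
      ∑ u ∈ C, w u * (nonnegInnerSum C u + negInnerSum C u) := by
  simp_rw [sum_inner, real_inner_smul_left, nonnegInnerSum_add_negInnerSum]

end InnerSums

section SmallInnerProducts

variable {C : Finset E} {α : ℝ}

lemma nonnegInnerSum_le (hα : 0 ≤ α) (hunit : ∀ u ∈ C, ‖u‖ = 1)
    (hpair : ∀ u ∈ C, ∀ v ∈ C, u ≠ v → ⟪u, v⟫ ≤ α) {u : E} (hu : u ∈ C) :
    nonnegInnerSum C u ≤ 1 + α * #C := by
  classical
  have hself : ⟪u, u⟫ = 1 := by rw [real_inner_self_eq_norm_sq, hunit u hu, one_pow]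
  have hmem : u ∈ C.filter (¬ ⟪u, ·⟫ < 0) := mem_filter.2 ⟨hu, by rw [hself]; norm_num⟩
  rw [nonnegInnerSum, ← add_sum_erase _ _ hmem, hself]
  gcongr 1 + ?_
  calc ∑ v ∈ (C.filter (¬ ⟪u, ·⟫ < 0)).erase u, ⟪u, v⟫
      ≤ #((C.filter (¬ ⟪u, ·⟫ < 0)).erase u) • α :=
        sum_le_card_nsmul _ _ _ fun v hv =>
          hpair u hu v (mem_filter.1 (mem_of_mem_erase hv)).1 (ne_of_mem_erase hv).symm
    _ ≤ #C * α := by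
        rw [nsmul_eq_mul]
        gcongr
        exact (erase_subset _ _).trans (filter_subset _ _)
    _ = α * #C := mul_comm _ _

lemma sum_nonnegInnerSum_le (hα : 0 ≤ α) (hunit : ∀ u ∈ C, ‖u‖ = 1)
    (hpair : ∀ u ∈ C, ∀ v ∈ C, u ≠ v → ⟪u, v⟫ ≤ α) :
    ∑ u ∈ C, nonnegInnerSum C u ≤ #C * (1 + α * #C) := by
  simpa only [nsmul_eq_mul] using
    sum_le_card_nsmul _ _ _ fun u hu => nonnegInnerSum_le hα hunit hpair hu

lemma inner_sum_smul_le (hα : 0 ≤ α) (hunit : ∀ u ∈ C, ‖u‖ = 1)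
    (hpair : ∀ u ∈ C, ∀ v ∈ C, u ≠ v → ⟪u, v⟫ ≤ α) {w : E → ℝ} (hw : ∀ v ∈ C, 0 ≤ w v)
    {u : E} (hu : u ∈ C) :
    ⟪u, ∑ v ∈ C, w v • v⟫ ≤ w u + α * ∑ v ∈ C, w v := by
  classical
  rw [inner_sum, ← add_sum_erase _ _ hu, real_inner_smul_right, real_inner_self_eq_norm_sq,
    hunit u hu, one_pow, mul_one, mul_sum]
  gcongr w u + ?_
  calc ∑ v ∈ C.erase u, ⟪u, w v • v⟫ ≤ ∑ v ∈ C.erase u, α * w v :=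
        sum_le_sum fun v hv => by
          rw [real_inner_smul_right, mul_comm]
          exact mul_le_mul_of_nonneg_right
            (hpair u hu v (mem_of_mem_erase hv) (ne_of_mem_erase hv).symm)
            (hw v (mem_of_mem_erase hv))
    _ ≤ ∑ v ∈ C, α * w v :=
        sum_le_sum_of_subset_of_nonneg (erase_subset _ _) fun v hv _ => mul_nonneg hα (hw v hv)

lemma norm_sum_smul_sq_le (hα : 0 ≤ α) (hunit : ∀ u ∈ C, ‖u‖ = 1)
    (hpair : ∀ u ∈ C, ∀ v ∈ C, u ≠ v → ⟪u, v⟫ ≤ α) {w : E → ℝ} (hw : ∀ v ∈ C, 0 ≤ w v) :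
    ‖∑ u ∈ C, w u • u‖ ^ 2 ≤ ∑ u ∈ C, w u ^ 2 + α * (∑ u ∈ C, w u) ^ 2 := by
  calc ‖∑ u ∈ C, w u • u‖ ^ 2 = ∑ u ∈ C, w u * ⟪u, ∑ v ∈ C, w v • v⟫ := by
        rw [← real_inner_self_eq_norm_sq, sum_inner]
        simp_rw [real_inner_smul_left]
    _ ≤ ∑ u ∈ C, w u * (w u + α * ∑ v ∈ C, w v) :=
        sum_le_sum fun u hu =>
          mul_le_mul_of_nonneg_left (inner_sum_smul_le hα hunit hpair hw hu) (hw u hu)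
    _ = ∑ u ∈ C, w u ^ 2 + α * (∑ u ∈ C, w u) ^ 2 := by
        simp_rw [mul_add, sum_add_distrib, ← sum_mul, sq]
        ring

lemma sq_sum_sub_sum_sq_le (hα : 0 ≤ α) (hunit : ∀ u ∈ C, ‖u‖ = 1)
    (hpair : ∀ u ∈ C, ∀ v ∈ C, u ≠ v → ⟪u, v⟫ ≤ α) :
    (∑ u ∈ C, -negInnerSum C u * nonnegInnerSum C u - ∑ u ∈ C, negInnerSum C u ^ 2) ^ 2 ≤
      (∑ u ∈ C, negInnerSum C u ^ 2 + α * (∑ u ∈ C, -negInnerSum C u) ^ 2) *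
        ∑ u ∈ C, nonnegInnerSum C u := by
  have hYX : ⟪∑ u ∈ C, -negInnerSum C u • u, ∑ v ∈ C, v⟫ =
      ∑ u ∈ C, -negInnerSum C u * nonnegInnerSum C u - ∑ u ∈ C, negInnerSum C u ^ 2 := by
    rw [inner_sum_smul_sum_eq, ← sum_sub_distrib]
    exact sum_congr rfl fun u _ => by ring
  have hY : ‖∑ u ∈ C, -negInnerSum C u • u‖ ^ 2 ≤
      ∑ u ∈ C, negInnerSum C u ^ 2 + α * (∑ u ∈ C, -negInnerSum C u) ^ 2 := by
    simpa only [neg_sq] using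
      norm_sum_smul_sq_le hα hunit hpair fun u _ => neg_nonneg.2 (negInnerSum_nonpos C u)
  rw [← hYX, sq]
  calc _ ≤ ‖∑ u ∈ C, -negInnerSum C u • u‖ ^ 2 * ‖∑ v ∈ C, v‖ ^ 2 := by
        simpa only [real_inner_self_eq_norm_sq] using real_inner_mul_inner_self_le _ _
    _ ≤ _ := mul_le_mul hY (norm_sum_sq_le_sum_nonnegInnerSum C) (sq_nonneg _)
        ((sq_nonneg _).trans hY)

end SmallInnerProducts

lemma le_three_mul_of_sq_sub_le {G T c : ℝ} (hc : 0 ≤ c) (hT : T ≤ c)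
    (h : (T - G) ^ 2 ≤ G * c + c ^ 2) : G ≤ 3 * c := by
  by_contra! hG
  nlinarith [mul_self_le_mul_self (by linarith : 0 ≤ G - c) (by linarith : G - c ≤ G - T)]

theorem sum_sq_negInnerSum_le {C : Finset E} {α : ℝ} (hα : 0 ≤ α) (hunit : ∀ u ∈ C, ‖u‖ = 1)
    (hpair : ∀ u ∈ C, ∀ v ∈ C, u ≠ v → ⟪u, v⟫ ≤ α) :
    ∑ u ∈ C, negInnerSum C u ^ 2 ≤ 3 * (#C * (1 + α * #C) ^ 2) := by
  set n : ℝ := (#C : ℝ)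
  set B := 1 + α * n
  set G := ∑ u ∈ C, negInnerSum C u ^ 2
  set S := ∑ u ∈ C, -negInnerSum C u
  set T := ∑ u ∈ C, -negInnerSum C u * nonnegInnerSum C u
  have hn : 0 ≤ n := Nat.cast_nonneg _
  have hB1 : 1 ≤ B := le_add_of_nonneg_right (mul_nonneg hα hn)
  have hG : 0 ≤ G := sum_nonneg fun u _ => sq_nonneg _
  have hS0 : 0 ≤ S := sum_nonneg fun u _ => neg_nonneg.2 (negInnerSum_nonpos C u)
  have hsum_le : ∑ u ∈ C, nonnegInnerSum C u ≤ n * B := sum_nonnegInnerSum_le hα hunit hpair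
  have hS : S ≤ n * B := (sum_neg_negInnerSum_le_sum_nonnegInnerSum C).trans hsum_le
  have hT : T ≤ n * B ^ 2 :=
    calc T ≤ ∑ u ∈ C, -negInnerSum C u * B := sum_le_sum fun u hu =>
          mul_le_mul_of_nonneg_left (nonnegInnerSum_le hα hunit hpair hu)
            (neg_nonneg.2 (negInnerSum_nonpos C u))
      _ = S * B := (sum_mul _ _ _).symm
      _ ≤ n * B * B := by gcongr
      _ = n * B ^ 2 := by ring
  have hCS : (T - G) ^ 2 ≤ (G + α * S ^ 2) * (n * B) :=
    (sq_sum_sub_sum_sq_le hα hunit hpair).trans (by gcongr)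
  refine le_three_mul_of_sq_sub_le (by positivity) hT (hCS.trans ?_)
  calc (G + α * S ^ 2) * (n * B) ≤ (G + α * (n * B) ^ 2) * (n * B) := by gcongr
    _ = G * (n * B) + (B - 1) * B ^ 3 * n ^ 2 := by simp only [B]; ring
    _ ≤ G * (n * B ^ 2) + B * B ^ 3 * n ^ 2 := by
        gcongr
        · exact le_self_pow₀ hB1 two_ne_zero
        · linarith
    _ = G * (n * B ^ 2) + (n * B ^ 2) ^ 2 := by ring

theorem gamma_sq_sum_bound_general {d n : ℕ} (α : ℝ) (hα0 : 0 ≤ α)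
    (𝒞 : Finset (EuclideanSpace ℝ (Fin d))) (hcard : 𝒞.card = n)
    (hunit : ∀ u ∈ 𝒞, ‖u‖ = 1)
    (hpair : ∀ u ∈ 𝒞, ∀ v ∈ 𝒞, u ≠ v → (inner ℝ u v : ℝ) ≤ α) :
    ∑ u ∈ 𝒞, (∑ v ∈ 𝒞.filter (fun v => (inner ℝ u v : ℝ) < 0), (inner ℝ u v : ℝ)) ^ 2
      ≤ 27 / 4 * (1 + α * n) ^ 2 * n := by
  have h := sum_sq_negInnerSum_le hα0 hunit hpair
  rw [hcard] at h
  have : 0 ≤ (n : ℝ) * (1 + α * n) ^ 2 := by positivity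
  calc _ = ∑ u ∈ 𝒞, negInnerSum 𝒞 u ^ 2 := rfl
    _ ≤ 3 * (n * (1 + α * n) ^ 2) := h
    _ ≤ 27 / 4 * (1 + α * n) ^ 2 * n := by linarith

theorem gamma_sq_sum_bound {d n : ℕ} (α : ℝ) (hα0 : 0 ≤ α) (hα1 : α < 1)
    (𝒞 : Finset (EuclideanSpace ℝ (Fin d))) (hcard : 𝒞.card = n)
    (hunit : ∀ u ∈ 𝒞, ‖u‖ = 1)
    (hpair : ∀ u ∈ 𝒞, ∀ v ∈ 𝒞, u ≠ v → (inner ℝ u v : ℝ) ≤ α) :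
    ∑ u ∈ 𝒞, (∑ v ∈ 𝒞.filter (fun v => (inner ℝ u v : ℝ) < 0), (inner ℝ u v : ℝ)) ^ 2
      ≤ 27 / 4 * (1 + α * n) ^ 2 * n :=
  gamma_sq_sum_bound_general α hα0 𝒞 hcard hunit hpair
end

section
/- For all positive integers k and r, any set of 2r + k unit vectors in ℝ^r contains two distinct vectors u, v with ⟨u,v⟩ ≥ ((8k/27 + 1)^{1/3} − 1)/(2r + k). -/
/-!
Let `G` be the Gram matrix of the `n = 2r + k` unit vectors, `α ≥ 0` a bound on its off-diagonal
entries, `J` the all-ones matrix and `β = nα`. The matrix `αJ + 1 - G` is entrywise nonnegative, so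
the trace of its cube is nonnegative. Expanding that trace, and using `tr G³ ≥ 4 tr G² - 4 tr G`
(as `λ(λ - 2)² ≥ 0` on the spectrum of `G ⪰ 0`) together with bounds on the row sums of `G` that
come from `‖G‖ ≤ 2(1 + β)`, gives `tr G² ≤ 2n + 3β(1 + β)² + β³`. Since `G` has rank at most `r`,
`tr G² ≥ n² / r`, and comparing the two bounds yields `8k/27 + 1 ≤ (1 + β)³`.
-/

open Matrix Finset
open scoped InnerProductSpace

namespace Matrix

section Trace
variable {ι R : Type*} [Fintype ι] [CommRing R]

theorem trace_vecMulVec_mul (u w : ι → R) (M : Matrix ι ι R) :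
    trace (vecMulVec u w * M) = w ⬝ᵥ M *ᵥ u := by
  rw [vecMulVec_mul, trace_vecMulVec, dotProduct_comm, dotProduct_mulVec]

variable [DecidableEq ι]

theorem trace_add_pow_three (A B : Matrix ι ι R) :
    trace ((A + B) ^ 3) = trace (A ^ 3) + 3 * trace (A ^ 2 * B) + 3 * trace (A * B ^ 2)
      + trace (B ^ 3) := by
  have h : (A + B) ^ 3 = A ^ 3 + (A ^ 2 * B + A * B * A + B * A ^ 2)
      + (A * B ^ 2 + B * A * B + B ^ 2 * A) + B ^ 3 := by noncomm_ring
  rw [h]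
  simp only [trace_add, sq]
  rw [trace_mul_cycle A B A, trace_mul_comm B (A * A), trace_mul_cycle B A B,
    trace_mul_comm (B * B) A]
  ring

theorem trace_smul_vecMulVec_add_pow_three (α : R) (u : ι → R) {E : Matrix ι ι R}
    (hE : Eᵀ = E) :
    trace ((α • vecMulVec u u + E) ^ 3) = α ^ 3 * (u ⬝ᵥ u) ^ 3
      + 3 * α ^ 2 * (u ⬝ᵥ u) * (u ⬝ᵥ E *ᵥ u) + 3 * α * ((E *ᵥ u) ⬝ᵥ (E *ᵥ u))
      + trace (E ^ 3) := by
  have hJ : vecMulVec u u * vecMulVec u u = (u ⬝ᵥ u) • vecMulVec u u := by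
    rw [vecMulVec_mul_vecMulVec, vecMulVec_smul]
  have hsq : (vecMulVec u u) ^ 2 = (u ⬝ᵥ u) • vecMulVec u u := by rw [sq, hJ]
  have hcube : (vecMulVec u u) ^ 3 = (u ⬝ᵥ u) ^ 2 • vecMulVec u u := by
    rw [pow_succ, hsq, smul_mul_assoc, hJ, smul_smul, sq]
  have hEu : u ⬝ᵥ E ^ 2 *ᵥ u = (E *ᵥ u) ⬝ᵥ (E *ᵥ u) := by
    rw [sq, ← mulVec_mulVec, dotProduct_mulVec, ← vecMul_transpose, hE]
  rw [trace_add_pow_three, smul_pow, smul_pow, hcube, hsq]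
  simp only [smul_mul_assoc, smul_smul, trace_smul, smul_eq_mul, trace_vecMulVec_mul,
    trace_vecMulVec, hEu]
  ring

end Trace

theorem PosSemidef.trace_one_sub_pow_three_le {ι : Type*} [Fintype ι] [DecidableEq ι]
    {G : Matrix ι ι ℝ} (hG : G.PosSemidef) :
    trace ((1 - G) ^ 3) ≤ Fintype.card ι + trace G - trace (G ^ 2) := by
  have hG2 : ((G - 2)ᴴ * G * (G - 2)).PosSemidef := hG.conjTranspose_mul_mul_same _
  rw [conjTranspose_sub, hG.isHermitian.eq, conjTranspose_ofNat] at hG2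
  have h : (1 - G) ^ 3 = 1 + G - G ^ 2 - (G - 2) * G * (G - 2) := by noncomm_ring
  rw [h, trace_sub, trace_sub, trace_add, trace_one]
  linarith [hG2.trace_nonneg]

section Rank
variable {ι κ : Type*} [Fintype κ] [DecidableEq κ]

theorem sq_trace_le_card_mul_trace_sq {S : Matrix κ κ ℝ} (hS : Sᵀ = S) :
    trace S ^ 2 ≤ Fintype.card κ * trace (S ^ 2) := by
  calc trace S ^ 2 ≤ Fintype.card κ * ∑ a, S a a ^ 2 := sq_sum_le_card_mul_sum_sq
    _ ≤ Fintype.card κ * ∑ a, ∑ b, S a b ^ 2 := by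
      gcongr with a
      exact single_le_sum (f := fun b => S a b ^ 2) (fun b _ => sq_nonneg _) (mem_univ a)
    _ = Fintype.card κ * trace (S ^ 2) := by
      congr 1
      refine sum_congr rfl fun a _ => ?_
      rw [sq, diag_apply, mul_apply]
      refine sum_congr rfl fun b _ => ?_
      rw [sq]
      nth_rewrite 2 [← hS]
      rfl

theorem sq_trace_mul_transpose_le [Fintype ι] [DecidableEq ι] (W : Matrix ι κ ℝ) :
    trace (W * Wᵀ) ^ 2 ≤ Fintype.card κ * trace ((W * Wᵀ) ^ 2) := by
  have h2 : trace ((W * Wᵀ) ^ 2) = trace ((Wᵀ * W) ^ 2) := by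
    rw [sq, sq, Matrix.mul_assoc, trace_mul_comm, ← Matrix.mul_assoc, ← Matrix.mul_assoc,
      Matrix.mul_assoc (Wᵀ * W)]
  rw [trace_mul_comm, h2]
  exact sq_trace_le_card_mul_trace_sq (by rw [transpose_mul, transpose_transpose])

end Rank

end Matrix

section InnerProductSpace
variable {ι E : Type*} [NormedAddCommGroup E] [InnerProductSpace ℝ E] {v : ι → E} {α : ℝ}

theorem inner_le_one_apply_add [DecidableEq ι] (hα : 0 ≤ α) (hv : ∀ i, ‖v i‖ = 1)
    (hle : ∀ i j, i ≠ j → ⟪v i, v j⟫_ℝ ≤ α) (i j : ι) :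
    ⟪v i, v j⟫_ℝ ≤ (1 : Matrix ι ι ℝ) i j + α := by
  rcases eq_or_ne i j with rfl | hij
  · simp [hv, hα]
  · simpa [one_apply_ne hij] using hle i j hij

variable [Fintype ι]

theorem Matrix.dotProduct_gram_mulVec (x y : ι → ℝ) :
    x ⬝ᵥ gram ℝ v *ᵥ y = ⟪∑ i, x i • v i, ∑ i, y i • v i⟫_ℝ := by
  simpa using star_dotProduct_gram_mulVec v x y

theorem Matrix.gram_mulVec_apply (x : ι → ℝ) (i : ι) :
    (gram ℝ v *ᵥ x) i = ⟪v i, ∑ j, x j • v j⟫_ℝ := by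
  simp [mulVec, dotProduct, inner_sum, real_inner_smul_right, mul_comm]

theorem sum_inner_sq_le_of_norm_sum_smul_sq_le {C : ℝ} (hC : 0 ≤ C)
    (h : ∀ x : ι → ℝ, ‖∑ i, x i • v i‖ ^ 2 ≤ C * ∑ i, x i ^ 2) (y : E) :
    ∑ i, ⟪v i, y⟫_ℝ ^ 2 ≤ C * ‖y‖ ^ 2 := by
  set S := ∑ i, ⟪v i, y⟫_ℝ ^ 2
  have hS : S = ⟪∑ i, ⟪v i, y⟫_ℝ • v i, y⟫_ℝ := by
    simp [S, sum_inner, real_inner_smul_left, sq]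
  have hS0 : 0 ≤ S := sum_nonneg fun i _ => sq_nonneg _
  have hCS : S ^ 2 ≤ C * S * ‖y‖ ^ 2 := by
    calc S ^ 2 ≤ (‖∑ i, ⟪v i, y⟫_ℝ • v i‖ * ‖y‖) ^ 2 := by
          gcongr
          exact hS ▸ real_inner_le_norm _ _
      _ = ‖∑ i, ⟪v i, y⟫_ℝ • v i‖ ^ 2 * ‖y‖ ^ 2 := mul_pow _ _ _
      _ ≤ C * S * ‖y‖ ^ 2 := by gcongr; exact h _
  rcases hS0.eq_or_lt with h0 | h0
  · nlinarith [mul_nonneg hC (sq_nonneg ‖y‖)]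
  · nlinarith

variable [DecidableEq ι]

theorem norm_sum_smul_sq_le_of_nonneg (hα : 0 ≤ α)
    (hv : ∀ i j, ⟪v i, v j⟫_ℝ ≤ (1 : Matrix ι ι ℝ) i j + α) {x : ι → ℝ} (hx : 0 ≤ x) :
    ‖∑ i, x i • v i‖ ^ 2 ≤ (1 + Fintype.card ι * α) * ∑ i, x i ^ 2 := by
  have hquad : ‖∑ i, x i • v i‖ ^ 2 ≤ ∑ i, x i ^ 2 + α * (∑ i, x i) ^ 2 := by
    calc ‖∑ i, x i • v i‖ ^ 2 = ∑ i, x i * ∑ j, ⟪v i, v j⟫_ℝ * x j := by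
          rw [← real_inner_self_eq_norm_sq, ← dotProduct_gram_mulVec]; rfl
      _ ≤ ∑ i, x i * ∑ j, ((1 : Matrix ι ι ℝ) i j + α) * x j := by
          gcongr with i _ j _
          · exact hx i
          · exact hx j
          · exact hv i j
      _ = ∑ i, x i ^ 2 + α * (∑ i, x i) ^ 2 := by
          simp only [add_mul, one_apply, ite_mul, one_mul, zero_mul, sum_add_distrib,
            sum_ite_eq, mem_univ, if_true, ← mul_sum, mul_add, sq, mul_left_comm _ α, sum_mul]
  have hcs : (∑ i, x i) ^ 2 ≤ Fintype.card ι * ∑ i, x i ^ 2 := sq_sum_le_card_mul_sum_sq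
  nlinarith

theorem norm_sum_smul_sq_le_s3 (hα : 0 ≤ α)
    (hv : ∀ i j, ⟪v i, v j⟫_ℝ ≤ (1 : Matrix ι ι ℝ) i j + α) (x : ι → ℝ) :
    ‖∑ i, x i • v i‖ ^ 2 ≤ 2 * (1 + Fintype.card ι * α) * ∑ i, x i ^ 2 := by
  have hsplit : ∑ i, x i • v i = ∑ i, x⁺ i • v i - ∑ i, x⁻ i • v i := by
    rw [← sum_sub_distrib]
    refine sum_congr rfl fun i _ => ?_
    rw [← sub_smul, ← Pi.sub_apply, posPart_sub_negPart]
  have hsq : ∑ i, x⁺ i ^ 2 + ∑ i, x⁻ i ^ 2 = ∑ i, x i ^ 2 := by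
    rw [← sum_add_distrib]
    refine sum_congr rfl fun i _ => ?_
    rcases le_total (x i) 0 with h | h
    · simp [posPart_eq_zero.2 h, negPart_eq_neg.2 h]
    · simp [posPart_eq_self.2 h, negPart_eq_zero.2 h]
  have hpos := norm_sum_smul_sq_le_of_nonneg hα hv (posPart_nonneg x)
  have hneg := norm_sum_smul_sq_le_of_nonneg hα hv (negPart_nonneg x)
  calc ‖∑ i, x i • v i‖ ^ 2 ≤ (‖∑ i, x⁺ i • v i‖ + ‖∑ i, x⁻ i • v i‖) ^ 2 := by
        rw [hsplit]; gcongr; exact norm_sub_le _ _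
    _ ≤ 2 * ‖∑ i, x⁺ i • v i‖ ^ 2 + 2 * ‖∑ i, x⁻ i • v i‖ ^ 2 := by
        nlinarith [sq_nonneg (‖∑ i, x⁺ i • v i‖ - ‖∑ i, x⁻ i • v i‖)]
    _ ≤ 2 * (1 + Fintype.card ι * α) * ∑ i, x i ^ 2 := by rw [← hsq]; linarith

theorem one_sub_gram_mulVec_one_le (hα : 0 ≤ α)
    (hv : ∀ i j, ⟪v i, v j⟫_ℝ ≤ (1 : Matrix ι ι ℝ) i j + α) :
    ((1 - gram ℝ v) *ᵥ 1) ⬝ᵥ ((1 - gram ℝ v) *ᵥ 1)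
        + Fintype.card ι * α * (1 ⬝ᵥ (1 - gram ℝ v) *ᵥ 1)
      ≤ Fintype.card ι * (1 + Fintype.card ι * α) ^ 2 := by
  set n : ℝ := (Fintype.card ι : ℝ)
  set s := ∑ i, v i
  have hσ : 1 ⬝ᵥ gram ℝ v *ᵥ 1 = ‖s‖ ^ 2 := by
    simp [dotProduct_gram_mulVec, s]
  have hQ : (gram ℝ v *ᵥ 1) ⬝ᵥ (gram ℝ v *ᵥ 1) = ∑ i, ⟪v i, s⟫_ℝ ^ 2 := by
    simp [dotProduct, gram_mulVec_apply, s, sq]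
  have hQle : ∑ i, ⟪v i, s⟫_ℝ ^ 2 ≤ 2 * (1 + n * α) * ‖s‖ ^ 2 :=
    sum_inner_sq_le_of_norm_sum_smul_sq_le (by positivity) (norm_sum_smul_sq_le_s3 hα hv) s
  have hs : ‖s‖ ^ 2 ≤ (1 + n * α) * n := by
    simpa [n] using norm_sum_smul_sq_le_of_nonneg hα hv (x := 1) zero_le_one
  have hn : 0 ≤ n * α := by positivity
  have h11 : (1 : ι → ℝ) ⬝ᵥ 1 = n := by simp [n]
  simp only [sub_mulVec, one_mulVec, dotProduct_sub, sub_dotProduct, hQ,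
    dotProduct_comm (gram ℝ v *ᵥ 1) 1, hσ, h11]
  nlinarith [mul_le_mul_of_nonneg_left hs hn]

theorem trace_gram_sq_le (hv : ∀ i, ‖v i‖ = 1) (hα : 0 ≤ α)
    (hle : ∀ i j, i ≠ j → ⟪v i, v j⟫_ℝ ≤ α) :
    trace (gram ℝ v ^ 2) ≤ 2 * Fintype.card ι
      + 3 * (Fintype.card ι * α) * (1 + Fintype.card ι * α) ^ 2 + (Fintype.card ι * α) ^ 3 := by
  set n : ℝ := (Fintype.card ι : ℝ)
  set G := gram ℝ v
  have hG := inner_le_one_apply_add hα hv hle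
  have hA : 0 ≤ trace ((α • vecMulVec 1 1 + (1 - G)) ^ 3) :=
    sum_nonneg fun i _ => pow_apply_nonneg (fun i j => by simp [G]; linarith [hG i j]) 3 i i
  have hE : (1 - G)ᵀ = 1 - G := by
    rw [transpose_sub, transpose_one, ← conjTranspose_eq_transpose_of_trivial,
      (isHermitian_gram ℝ v).eq]
  have htr : trace G = n := by simp [G, trace, hv, n]
  have h11 : (1 : ι → ℝ) ⬝ᵥ 1 = n := by simp [n]
  rw [trace_smul_vecMulVec_add_pow_three α 1 hE, h11] at hA
  have hrow := mul_le_mul_of_nonneg_left (one_sub_gram_mulVec_one_le hα hG) hα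
  have hcube := (posSemidef_gram ℝ v).trace_one_sub_pow_three_le
  rw [htr] at hcube
  linarith

end InnerProductSpace

theorem EuclideanSpace.gram_eq_mul_transpose {ι κ : Type*} [Fintype κ]
    (v : ι → EuclideanSpace ℝ κ) :
    gram ℝ v = of (fun i a => v i a) * (of fun i a => v i a)ᵀ := by
  ext i j
  simp [mul_apply, PiLp.inner_apply, mul_comm]

theorem le_one_add_pow_three_of_sq_le {n r β : ℝ} (hβ : 0 ≤ β) (hr : 0 ≤ r) (hrn : 2 * r ≤ n)
    (h : n ^ 2 ≤ r * (2 * n + 3 * β * (1 + β) ^ 2 + β ^ 3)) :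
    8 / 27 * (n - 2 * r) + 1 ≤ (1 + β) ^ 3 := by
  have hY : 0 ≤ 3 * β * (1 + β) ^ 2 + β ^ 3 := by positivity
  have hgap : 2 * (n - 2 * r) ≤ 3 * β * (1 + β) ^ 2 + β ^ 3 := by nlinarith
  nlinarith

theorem eight_div_27_mul_sub_add_one_le_of_inner_le {ι κ : Type*} [Fintype ι] [DecidableEq ι]
    [Fintype κ] [DecidableEq κ] {v : ι → EuclideanSpace ℝ κ} {α : ℝ} (hv : ∀ i, ‖v i‖ = 1)
    (hα : 0 ≤ α) (hle : ∀ i j, i ≠ j → ⟪v i, v j⟫_ℝ ≤ α)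
    (hκ : 2 * Fintype.card κ ≤ Fintype.card ι) :
    8 / 27 * ((Fintype.card ι : ℝ) - 2 * Fintype.card κ) + 1 ≤ (1 + Fintype.card ι * α) ^ 3 := by
  have htr : trace (gram ℝ v) = Fintype.card ι := by simp [trace, hv]
  have hrank := sq_trace_mul_transpose_le (of fun i a => v i a)
  rw [← EuclideanSpace.gram_eq_mul_transpose, htr] at hrank
  refine le_one_add_pow_three_of_sq_le (by positivity) (by positivity) (by exact_mod_cast hκ) ?_
  calc (Fintype.card ι : ℝ) ^ 2 ≤ Fintype.card κ * trace (gram ℝ v ^ 2) := hrank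
    _ ≤ _ := by gcongr; exact trace_gram_sq_le hv hα hle

theorem Finset.exists_nonneg_lt_forall_le {γ : Type*} {s : Finset γ} (f : γ → ℝ) {b : ℝ}
    (hb : 0 < b) (h : ∀ x ∈ s, f x < b) : ∃ c, 0 ≤ c ∧ c < b ∧ ∀ x ∈ s, f x ≤ c := by
  classical
  refine ⟨(insert 0 (s.image f)).max' (insert_nonempty _ _), le_max' _ _ (mem_insert_self _ _),
    ?_, fun x hx => le_max' _ _ (mem_insert_of_mem (mem_image_of_mem f hx))⟩
  simpa [max'_lt_iff, hb] using h

theorem main_rho_lower_bound_general (k r : ℕ) (hk : 0 < k)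
    (v : Fin (2 * r + k) → EuclideanSpace ℝ (Fin r))
    (hunit : ∀ i, ‖v i‖ = 1) :
    ∃ i j, i ≠ j ∧
      (inner ℝ (v i) (v j) : ℝ) ≥
        ((8 / 27 * k + 1) ^ ((1 : ℝ) / 3) - 1) / (2 * r + k) := by
  set n : ℝ := 2 * r + k
  set c : ℝ := (8 / 27 * k + 1) ^ ((1 : ℝ) / 3) with hc
  have hn : 0 < n := by positivity
  have hc3 : c ^ 3 = 8 / 27 * k + 1 := by
    rw [hc, ← Real.rpow_natCast, ← Real.rpow_mul (by positivity)]
    norm_num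
  have hc1 : 1 < c := Real.one_lt_rpow (by norm_num; positivity) (by norm_num)
  by_contra! hlt
  obtain ⟨α, hα, hαlt, hαle⟩ := exists_nonneg_lt_forall_le (s := univ.offDiag)
    (fun p => ⟪v p.1, v p.2⟫_ℝ) (div_pos (sub_pos.2 hc1) hn)
    (fun p hp => hlt p.1 p.2 (mem_offDiag.1 hp).2.2)
  have key := eight_div_27_mul_sub_add_one_le_of_inner_le hunit hα
    (fun i j hij => hαle (i, j) (by simp [hij])) (by simp)
  simp only [Fintype.card_fin, Nat.cast_add, Nat.cast_mul, Nat.cast_ofNat] at key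
  have hlt' : 1 + n * α < c := by
    calc 1 + n * α < 1 + n * ((c - 1) / n) := by gcongr
      _ = c := by rw [mul_div_cancel₀ _ hn.ne']; ring
  have hcube := pow_lt_pow_left₀ hlt' (by positivity) three_ne_zero
  rw [hc3] at hcube
  linarith

theorem main_rho_lower_bound (k r : ℕ) (hk : 0 < k) (hr : 0 < r)
    (v : Fin (2 * r + k) → EuclideanSpace ℝ (Fin r))
    (hunit : ∀ i, ‖v i‖ = 1) :
    ∃ i j, i ≠ j ∧
      (inner ℝ (v i) (v j) : ℝ) ≥
        ((8 / 27 * k + 1) ^ ((1 : ℝ) / 3) - 1) / (2 * r + k) :=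
  main_rho_lower_bound_general k r hk v hunit
end

section
/- Let 𝒞 be a set of n unit vectors with pairwise inner products in [−1, α], 0 ≤ α < 1, let γ(u) be the sum of negative inner products at u, let L = (3/2)(1 + αn), and let B = {u ∈ 𝒞 : −γ(u) ≥ L}. Define x(u) = −γ(u) for u ∈ B and x(u) = L otherwise. Then 0 ≤ (1 + αn)·Σ_{u∈𝒞} x(u)² − L·Σ_{u∈B} x(u)², and consequently Σ_{u∈B} x(u)² ≤ 2L²n. -/
/-!
Positive semidefiniteness of the Gram matrix gives `0 ≤ ∑ᵤ ∑ᵥ x(u) x(v) ⟨u, v⟩`. In the row of `u`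
the diagonal term is `x(u)²`, a nonnegative pair contributes at most `α x(u) x(v)`, and a negative
pair at most `L x(u) ⟨u, v⟩` because `x ≥ L`; the last contributions add up to `L x(u) γ(u)`, which
is `-L x(u)²` for `u ∈ B` and nonpositive otherwise. Cauchy–Schwarz bounds `α (∑ x)²` by
`α n ∑ x²`, which gives the first inequality. Since `x = L` off `B`, `∑_𝒞 x² ≤ ∑_B x² + n L²`, and
`1 + α n = 2L/3` turns the first inequality into the second.
-/

open Finset RealInnerProductSpace

section WeightedSums

variable {ι : Type*} [DecidableEq ι] {s B : Finset ι} {x γ : ι → ℝ}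

theorem sum_mul_le_neg_sum_sq (hBs : B ⊆ s) (hγ : ∀ u ∈ s, γ u ≤ 0)
    (hxB : ∀ u ∈ B, x u = -γ u) (hx : ∀ u, 0 ≤ x u) :
    ∑ u ∈ s, x u * γ u ≤ -∑ u ∈ B, x u ^ 2 := by
  rw [← sum_sdiff hBs, ← sum_neg_distrib]
  have hB : ∑ u ∈ B, x u * γ u = ∑ u ∈ B, -x u ^ 2 :=
    sum_congr rfl fun u hu ↦ by rw [hxB u hu]; ring
  have hrest : ∑ u ∈ s \ B, x u * γ u ≤ 0 :=
    sum_nonpos fun u hu ↦ mul_nonpos_of_nonneg_of_nonpos (hx u) (hγ u (sdiff_subset hu))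
  linarith

theorem sum_sq_le_sum_sq_add_card_mul_sq {L : ℝ} (hBs : B ⊆ s) (hx : ∀ u ∈ s \ B, x u = L) :
    ∑ u ∈ s, x u ^ 2 ≤ ∑ u ∈ B, x u ^ 2 + #s * L ^ 2 := by
  have hrest : ∑ u ∈ s \ B, x u ^ 2 = #(s \ B) * L ^ 2 := by
    rw [sum_congr rfl fun u hu ↦ by rw [hx u hu], sum_const, nsmul_eq_mul]
  have hcard : (#(s \ B) : ℝ) ≤ #s := by exact_mod_cast card_le_card sdiff_subset
  rw [← sum_sdiff hBs, hrest]
  nlinarith [sq_nonneg L]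

end WeightedSums

section Gram

variable {E : Type*} [NormedAddCommGroup E] [InnerProductSpace ℝ E]

theorem sum_sum_mul_mul_inner_nonneg (s : Finset E) (x : E → ℝ) :
    0 ≤ ∑ u ∈ s, ∑ v ∈ s, x u * x v * ⟪u, v⟫ := by
  calc 0 ≤ ⟪∑ u ∈ s, x u • u, ∑ v ∈ s, x v • v⟫ := real_inner_self_nonneg
    _ = ∑ u ∈ s, ∑ v ∈ s, x u * x v * ⟪u, v⟫ := by
      simp only [sum_inner, inner_sum, real_inner_smul_left, real_inner_smul_right]
      exact sum_congr rfl fun _ _ ↦ sum_congr rfl fun _ _ ↦ by rw [real_inner_comm, mul_assoc]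

theorem mul_mul_inner_le [DecidableEq E] {u v : E} {α L : ℝ} {x : E → ℝ} (hu : ‖u‖ = 1)
    (hpair : u ≠ v → ⟪u, v⟫ ≤ α) (hα : 0 ≤ α) (hL : 0 ≤ L) (hxu : 0 ≤ x u) (hxv : L ≤ x v) :
    x u * x v * ⟪u, v⟫ ≤ (if v = u then x u ^ 2 else 0) + α * (x u * x v) +
      if ⟪u, v⟫ < 0 then L * x u * ⟪u, v⟫ else 0 := by
  have hxx : 0 ≤ x u * x v := mul_nonneg hxu (hL.trans hxv)
  by_cases hvu : v = u
  · subst hvu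
    have : ⟪v, v⟫ = 1 := by rw [real_inner_self_eq_norm_sq, hu, one_pow]
    simp only [this, if_true, mul_one, not_lt.mpr zero_le_one, if_false, add_zero]
    nlinarith [mul_nonneg hα hxx]
  · rw [if_neg hvu, zero_add]
    split_ifs with hneg
    · have : x u * x v * ⟪u, v⟫ ≤ x u * L * ⟪u, v⟫ :=
        mul_le_mul_of_nonpos_right (mul_le_mul_of_nonneg_left hxv hxu) hneg.le
      nlinarith [mul_nonneg hα hxx]
    · nlinarith [hpair (Ne.symm hvu), mul_nonneg hα hxx]

theorem sum_mul_mul_inner_le {s : Finset E} {u : E} {α L : ℝ} {x : E → ℝ} (hus : u ∈ s)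
    (hu : ‖u‖ = 1) (hpair : ∀ v ∈ s, u ≠ v → ⟪u, v⟫ ≤ α) (hα : 0 ≤ α) (hL : 0 ≤ L)
    (hx : ∀ v, L ≤ x v) :
    ∑ v ∈ s, x u * x v * ⟪u, v⟫ ≤ x u ^ 2 + α * (x u * ∑ v ∈ s, x v) +
      L * x u * ∑ v ∈ s with ⟪u, v⟫ < 0, ⟪u, v⟫ := by
  classical
  calc ∑ v ∈ s, x u * x v * ⟪u, v⟫
      ≤ ∑ v ∈ s, ((if v = u then x u ^ 2 else 0) + α * (x u * x v) +
          if ⟪u, v⟫ < 0 then L * x u * ⟪u, v⟫ else 0) :=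
        sum_le_sum fun v hv ↦ mul_mul_inner_le hu (hpair v hv) hα hL (hL.trans (hx u)) (hx v)
    _ = _ := by
      rw [sum_add_distrib, sum_add_distrib, sum_ite_eq' s u, if_pos hus, sum_ite, sum_const_zero,
        add_zero]
      simp only [mul_sum]

theorem sum_sum_mul_mul_inner_le {s : Finset E} {α L : ℝ} {x : E → ℝ}
    (hunit : ∀ u ∈ s, ‖u‖ = 1) (hpair : ∀ u ∈ s, ∀ v ∈ s, u ≠ v → ⟪u, v⟫ ≤ α) (hα : 0 ≤ α)
    (hL : 0 ≤ L) (hx : ∀ v, L ≤ x v) :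
    ∑ u ∈ s, ∑ v ∈ s, x u * x v * ⟪u, v⟫ ≤ (1 + α * #s) * ∑ u ∈ s, x u ^ 2 +
      L * ∑ u ∈ s, x u * ∑ v ∈ s with ⟪u, v⟫ < 0, ⟪u, v⟫ := by
  have hCS := mul_le_mul_of_nonneg_left (sq_sum_le_card_mul_sum_sq (s := s) (f := x)) hα
  calc ∑ u ∈ s, ∑ v ∈ s, x u * x v * ⟪u, v⟫
      ≤ ∑ u ∈ s, (x u ^ 2 + α * (x u * ∑ v ∈ s, x v) +
          L * x u * ∑ v ∈ s with ⟪u, v⟫ < 0, ⟪u, v⟫) :=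
        sum_le_sum fun u hu ↦ sum_mul_mul_inner_le hu (hunit u hu) (hpair u hu) hα hL hx
    _ = ∑ u ∈ s, x u ^ 2 + α * (∑ u ∈ s, x u) ^ 2 +
          L * ∑ u ∈ s, x u * ∑ v ∈ s with ⟪u, v⟫ < 0, ⟪u, v⟫ := by
      rw [sum_add_distrib, sum_add_distrib, ← mul_sum, ← sum_mul, sq]
      simp only [mul_assoc, ← mul_sum]
    _ ≤ _ := by linarith

end Gram

open Classical in
theorem key_intermediate_step_general {d n : ℕ} (α : ℝ) (hα0 : 0 ≤ α)
    (𝒞 : Finset (EuclideanSpace ℝ (Fin d))) (hcard : 𝒞.card = n)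
    (hunit : ∀ u ∈ 𝒞, ‖u‖ = 1)
    (hpair : ∀ u ∈ 𝒞, ∀ v ∈ 𝒞, u ≠ v → (inner ℝ u v : ℝ) ≤ α)
    (γ : EuclideanSpace ℝ (Fin d) → ℝ)
    (hγ : ∀ u, γ u = ∑ v ∈ 𝒞.filter (fun v => (inner ℝ u v : ℝ) < 0), (inner ℝ u v : ℝ))
    (L : ℝ) (hL : L = 3 / 2 * (1 + α * n))
    (B : Finset (EuclideanSpace ℝ (Fin d)))
    (hB : B = 𝒞.filter (fun u => L ≤ -γ u))
    (x : EuclideanSpace ℝ (Fin d) → ℝ)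
    (hx : ∀ u, x u = if u ∈ B then -γ u else L) :
    0 ≤ (1 + α * n) * ∑ u ∈ 𝒞, x u ^ 2 - L * ∑ u ∈ B, x u ^ 2 ∧
    ∑ u ∈ B, x u ^ 2 ≤ 2 * L ^ 2 * n := by
  have hLpos : 0 < L := by rw [hL]; positivity
  have hBs : B ⊆ 𝒞 := hB ▸ filter_subset _ _
  have hxL : ∀ u, L ≤ x u := fun u ↦ by
    rw [hx u]
    split_ifs with hu
    · rw [hB] at hu
      exact (mem_filter.mp hu).2
    · exact le_rfl
  have hquad := (sum_sum_mul_mul_inner_nonneg 𝒞 x).trans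
    (sum_sum_mul_mul_inner_le hunit hpair hα0 hLpos.le hxL)
  simp only [← hγ, hcard] at hquad
  have hneg := sum_mul_le_neg_sum_sq (x := x) (γ := γ) hBs
    (fun u _ ↦ by rw [hγ u]; exact sum_nonpos fun v hv ↦ (mem_filter.mp hv).2.le)
    (fun u hu ↦ by rw [hx u, if_pos hu]) (fun u ↦ hLpos.le.trans (hxL u))
  have hfirst : 0 ≤ (1 + α * n) * ∑ u ∈ 𝒞, x u ^ 2 - L * ∑ u ∈ B, x u ^ 2 := by
    linarith [mul_le_mul_of_nonneg_left hneg hLpos.le]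
  refine ⟨hfirst, ?_⟩
  have hsplit := sum_sq_le_sum_sq_add_card_mul_sq (x := x) (L := L) hBs
    (fun u hu ↦ by rw [hx u, if_neg (mem_sdiff.mp hu).2])
  rw [hcard] at hsplit
  have hLn : 1 + α * n = 2 / 3 * L := by rw [hL]; ring
  rw [hLn] at hfirst
  nlinarith

open Classical in
theorem key_intermediate_step {d n : ℕ} (α : ℝ) (hα0 : 0 ≤ α) (hα1 : α < 1)
    (𝒞 : Finset (EuclideanSpace ℝ (Fin d))) (hcard : 𝒞.card = n)
    (hunit : ∀ u ∈ 𝒞, ‖u‖ = 1)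
    (hpair : ∀ u ∈ 𝒞, ∀ v ∈ 𝒞, u ≠ v → (inner ℝ u v : ℝ) ≤ α)
    (γ : EuclideanSpace ℝ (Fin d) → ℝ)
    (hγ : ∀ u, γ u = ∑ v ∈ 𝒞.filter (fun v => (inner ℝ u v : ℝ) < 0), (inner ℝ u v : ℝ))
    (L : ℝ) (hL : L = 3 / 2 * (1 + α * n))
    (B : Finset (EuclideanSpace ℝ (Fin d)))
    (hB : B = 𝒞.filter (fun u => L ≤ -γ u))
    (x : EuclideanSpace ℝ (Fin d) → ℝ)
    (hx : ∀ u, x u = if u ∈ B then -γ u else L) :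
    0 ≤ (1 + α * n) * ∑ u ∈ 𝒞, x u ^ 2 - L * ∑ u ∈ B, x u ^ 2 ∧
    ∑ u ∈ B, x u ^ 2 ≤ 2 * L ^ 2 * n :=
  key_intermediate_step_general α hα0 𝒞 hcard hunit hpair γ hγ L hL B hB x hx
end

section
/- If there exist n unit vectors in ℝ^r with all pairwise inner products ≤ 0, then n ≤ 2r. -/
/-!
Pick `u` with `⟪u, v i⟫ ≠ 0` for every `i`; this is possible since finitely many proper
hyperplanes do not cover the space. The vectors on either side of `u^⊥` are linearly independent,
so there are at most `r` on each side. For independence, split a vanishing combination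
`∑ g i • v i = 0` into its positive part `w` and its nonpositive part `-w`; expanding `⟪w, w⟫`
across the two parts gives a sum of terms `g i * (-g j) * ⟪v i, v j⟫ ≤ 0` with `i ≠ j`, so
`w = 0`. Then `⟪u, w⟫ = 0` forces every positive coefficient to vanish.
-/

open Finset Module RealInnerProductSpace

variable {E : Type*} [NormedAddCommGroup E] [InnerProductSpace ℝ E] {ι : Type*} {v : ι → E}

lemma nonpos_of_sum_smul_eq_zero_of_pairwise_inner_nonpos
    (hv : Pairwise fun i j => ⟪v i, v j⟫ ≤ 0) {u : E} (hu : ∀ i, 0 < ⟪u, v i⟫)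
    {s : Finset ι} {g : ι → ℝ} (hg : ∑ i ∈ s, g i • v i = 0) {i : ι} (hi : i ∈ s) :
    g i ≤ 0 := by
  classical
  set P := s.filter (0 < g ·)
  set w := ∑ i ∈ P, g i • v i
  have hw_eq : w = ∑ j ∈ s.filter (¬0 < g ·), (-g j) • v j := by
    rw [← sum_filter_add_sum_filter_not s (0 < g ·)] at hg
    simp only [neg_smul, sum_neg_distrib]
    exact eq_neg_of_add_eq_zero_left hg
  have hw : w = 0 := by
    rw [← real_inner_self_nonpos]
    nth_rewrite 2 [hw_eq]
    simp only [w, sum_inner, inner_sum, real_inner_smul_left, real_inner_smul_right]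
    refine sum_nonpos fun j hj => sum_nonpos fun k hk => ?_
    rw [mem_filter] at hj hk
    have hkj : k ≠ j := fun h => hj.2 (h ▸ hk.2)
    exact mul_nonpos_of_nonneg_of_nonpos (neg_nonneg.mpr (not_lt.mp hj.2))
      (mul_nonpos_of_nonneg_of_nonpos hk.2.le (hv hkj))
  by_contra! hgi
  have hpos : 0 < ⟪u, w⟫ := by
    simp only [w, inner_sum, real_inner_smul_right]
    exact sum_pos' (fun j hj => mul_nonneg (mem_filter.mp hj).2.le (hu j).le)
      ⟨i, mem_filter.mpr ⟨hi, hgi⟩, mul_pos hgi (hu i)⟩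
  simp [hw] at hpos

theorem linearIndependent_of_pairwise_inner_nonpos
    (hv : Pairwise fun i j => ⟪v i, v j⟫ ≤ 0) {u : E} (hu : ∀ i, 0 < ⟪u, v i⟫) :
    LinearIndependent ℝ v := by
  rw [linearIndependent_iff']
  intro s g hg i hi
  have hg_neg : ∑ i ∈ s, (-g) i • v i = 0 := by simp [neg_smul, hg]
  exact le_antisymm (nonpos_of_sum_smul_eq_zero_of_pairwise_inner_nonpos hv hu hg hi)
    (neg_nonpos.mp (nonpos_of_sum_smul_eq_zero_of_pairwise_inner_nonpos hv hu hg_neg hi))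

theorem card_filter_inner_pos_le_finrank [FiniteDimensional ℝ E] [Fintype ι]
    (hv : Pairwise fun i j => ⟪v i, v j⟫ ≤ 0) (u : E) [DecidablePred fun i => 0 < ⟪u, v i⟫] :
    #{i | 0 < ⟪u, v i⟫} ≤ finrank ℝ E := by
  set s : Finset ι := {i | 0 < ⟪u, v i⟫}
  have hind : LinearIndependent ℝ fun i : s => v i :=
    linearIndependent_of_pairwise_inner_nonpos (u := u)
      (fun i j hij => hv (Subtype.coe_injective.ne hij)) fun i => (mem_filter.mp i.2).2
  simpa using hind.fintype_card_le_finrank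

theorem exists_forall_inner_ne_zero [Finite ι] (hv : ∀ i, v i ≠ 0) :
    ∃ u : E, ∀ i, ⟪u, v i⟫ ≠ 0 := by
  obtain ⟨u, hu⟩ := Dual.exists_forall_ne_zero_of_forall_exists (fun i => innerₗ E (v i))
    fun i => ⟨v i, by simpa using hv i⟩
  exact ⟨u, fun i => by simpa [real_inner_comm] using hu i⟩

theorem card_le_two_mul_finrank_of_pairwise_inner_nonpos [FiniteDimensional ℝ E] [Fintype ι]
    (hv0 : ∀ i, v i ≠ 0) (hv : Pairwise fun i j => ⟪v i, v j⟫ ≤ 0) :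
    Fintype.card ι ≤ 2 * finrank ℝ E := by
  classical
  obtain ⟨u, hu⟩ := exists_forall_inner_ne_zero hv0
  have hneg : #{i | ¬0 < ⟪u, v i⟫} ≤ #{i | 0 < ⟪-u, v i⟫} := by
    refine card_le_card fun i => ?_
    simp only [mem_filter, mem_univ, true_and, inner_neg_left, neg_pos]
    exact fun h => lt_of_le_of_ne (not_lt.mp h) (hu i)
  have hsplit := card_filter_add_card_filter_not (s := univ) (fun i => 0 < ⟪u, v i⟫)
  have hpos := card_filter_inner_pos_le_finrank hv u
  have hpos_neg := card_filter_inner_pos_le_finrank hv (-u)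
  rw [card_univ] at hsplit
  omega

theorem nonpos_code_le_two_dim (n r : ℕ)
    (v : Fin n → EuclideanSpace ℝ (Fin r))
    (hunit : ∀ i, ‖v i‖ = 1)
    (hpair : ∀ i j, i ≠ j → (inner ℝ (v i) (v j) : ℝ) ≤ 0) :
    n ≤ 2 * r := by
  have hv0 : ∀ i, v i ≠ 0 := fun i => norm_ne_zero_iff.mp (by simp [hunit i])
  simpa using card_le_two_mul_finrank_of_pairwise_inner_nonpos hv0 hpair
end
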